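/- Let u, v be two distinct top vertices (u drawn above v), B a finite bottom set, and Adj a function assigning to each b ∈ B a nonempty subset Adj(b) ⊆ {u,v}; let k be the number of b ∈ B with Adj(b) = {u,v}. Then for every red-edge selection r : B → {u,v} (with r(b) ∈ Adj(b) for all b ∈ B) there exists a linear order ≺ on B with cr(≺) = k·(k−1)/2 that satisfies the red-edge constraint for r; such an order is obtained by placing all b with Adj(b) = {u} first, then the common neighbors with r(b) = u, then the common neighbors with r(b) = v, then all b with Adj(b) = {v}. -/

import Mathlib

/-!
Rank the bottom vertices by the block `0, 1, 2, 3` they belong to and break ties by any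
well-order. A red `u`-edge ends in block `0` or `1` and a red `v`-edge in block `2` or `3`, so red
edges never cross. A crossing pair `(u, a), (v, b)` with `b ≺ a` forces
`1 ≤ block b ≤ block a ≤ 2`, so both ends are common neighbours; conversely each pair of distinct
common neighbours crosses in exactly one orientation, which gives `k.choose 2` crossings.
-/

/-- Crossing count of a 2-layer drawing: the number of ordered pairs `(a, b)` of
bottom vertices with `b ≺ a`, `u ∈ Adj a` and `v ∈ Adj b`. -/
noncomputable def crossNum2 {T B : Type} (u v : T) (Adj : B → Set T)
    (lt : B → B → Prop) : ℕ :=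
  {p : B × B | lt p.2 p.1 ∧ u ∈ Adj p.1 ∧ v ∈ Adj p.2}.ncard

/-- The red-edge constraint: no two red edges cross. -/
def REC2 {T B : Type} (u v : T) (r : B → T) (lt : B → B → Prop) : Prop :=
  ∀ a b : B, a ≠ b →
    ¬ ((r a = u ∧ r b = v ∧ lt b a) ∨ (r a = v ∧ r b = u ∧ lt a b))

open Finset Function

theorem exists_isStrictTotalOrder_refining {B α : Type*} [LinearOrder α] (f : B → α) :
    ∃ lt : B → B → Prop, IsStrictTotalOrder B lt ∧
      (∀ a b, f a < f b → lt a b) ∧ ∀ a b, lt a b → f a ≤ f b := by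
  let g : B → α ×ₗ Cardinal := fun b => toLex (f b, embeddingToCardinal b)
  have hg : g.Injective := fun a b h =>
    embeddingToCardinal.injective (congrArg Prod.snd (toLex.injective h))
  exact ⟨(· < ·) on g, hg.isStrictTotalOrder_onFun _,
    fun a b h => Prod.Lex.toLex_lt_toLex.2 (Or.inl h),
    fun a b h => (Prod.Lex.toLex_lt_toLex'.1 (show g a < g b from h)).1⟩

theorem card_filter_product_rel_eq_choose_two {α : Type*} [DecidableEq α] (r : α → α → Prop)
    [IsStrictTotalOrder α r] [DecidableRel r] (s : Finset α) :
    #{p ∈ s ×ˢ s | r p.2 p.1} = (#s).choose 2 := by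
  rw [← Sym2.card_image_offDiag]
  refine card_nbij (fun p => s(p.1, p.2)) ?_ ?_ ?_
  · intro p hp
    simp only [coe_filter, mem_product, Set.mem_ofPred_eq] at hp
    simp only [coe_image, Set.mem_image, mem_coe, mem_offDiag]
    exact ⟨p, ⟨hp.1.1, hp.1.2, fun h => irrefl_of r p.1 (h ▸ hp.2)⟩, rfl⟩
  · intro p hp q hq hpq
    simp only [coe_filter, mem_product, Set.mem_ofPred_eq] at hp hq
    rcases Sym2.mk_eq_mk_iff.1 hpq with h | h
    · exact h
    · exfalso
      subst h
      exact asymm hp.2 hq.2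
  · intro z hz
    simp only [coe_image, Set.mem_image, mem_coe, mem_offDiag] at hz
    obtain ⟨⟨a, b⟩, ⟨ha, hb, hab⟩, rfl⟩ := hz
    rcases trichotomous_of r a b with h | h | h
    · exact ⟨(b, a), by simp [ha, hb, h], Sym2.eq_swap⟩
    · exact absurd h hab
    · exact ⟨(a, b), by simp [ha, hb, h], rfl⟩

section Block

variable {T B : Type} (u v : T) (Adj : B → Set T) (r : B → T)

open Classical in
/-- The four blocks of the order, numbered `0, 1, 2, 3` from top to bottom. -/
noncomputable def block (b : B) : ℕ :=
  if u ∉ Adj b then 3 else if v ∉ Adj b then 0 else if r b = u then 1 else 2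

variable {u v Adj r}

theorem block_le_two {b : B} (h : u ∈ Adj b) : block u v Adj r b ≤ 2 := by
  unfold block; split_ifs <;> simp_all

theorem one_le_block {b : B} (h : v ∈ Adj b) : 1 ≤ block u v Adj r b := by
  unfold block; split_ifs <;> simp_all

theorem adj_eq_pair_of_one_le_block_le_two (hsub : ∀ b, Adj b ⊆ {u, v}) {b : B}
    (h₁ : 1 ≤ block u v Adj r b) (h₂ : block u v Adj r b ≤ 2) : Adj b = {u, v} := by
  refine (hsub b).antisymm (Set.pair_subset ?_ ?_) <;>
    unfold block at h₁ h₂ <;> split_ifs at h₁ h₂ <;> simp_all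

theorem block_le_one {b : B} (hr : r b ∈ Adj b) (h : r b = u) : block u v Adj r b ≤ 1 := by
  unfold block; split_ifs <;> simp_all

theorem two_le_block (huv : u ≠ v) {b : B} (hr : r b ∈ Adj b) (h : r b = v) :
    2 ≤ block u v Adj r b := by
  unfold block; split_ifs <;> simp_all

theorem block_lt_block (huv : u ≠ v) {a b : B}
    (h : (Adj a = {u} ∧ (Adj b = {u, v} ∨ Adj b = {v})) ∨
      (Adj a = {u, v} ∧ r a = u ∧ ((Adj b = {u, v} ∧ r b = v) ∨ Adj b = {v})) ∨
      (Adj a = {u, v} ∧ r a = v ∧ Adj b = {v})) :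
    block u v Adj r a < block u v Adj r b := by
  rcases h with ⟨ha, hb | hb⟩ | ⟨ha, hra, ⟨hb, hrb⟩ | hb⟩ | ⟨ha, hra, hb⟩ <;>
    unfold block <;> split_ifs <;> simp_all [huv.symm]

theorem crossing_set_eq_common_pairs (hsub : ∀ b, Adj b ⊆ {u, v}) {lt : B → B → Prop}
    (hlt : ∀ a b, lt a b → block u v Adj r a ≤ block u v Adj r b) :
    {p : B × B | lt p.2 p.1 ∧ u ∈ Adj p.1 ∧ v ∈ Adj p.2} =
      {p : B × B | Adj p.1 = {u, v} ∧ Adj p.2 = {u, v} ∧ lt p.2 p.1} := by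
  ext ⟨a, b⟩
  simp only [Set.mem_ofPred_eq]
  constructor
  · rintro ⟨hba, hua, hvb⟩
    have hle := hlt b a hba
    have hb₁ : 1 ≤ block u v Adj r b := one_le_block hvb
    have ha₂ : block u v Adj r a ≤ 2 := block_le_two hua
    exact ⟨adj_eq_pair_of_one_le_block_le_two hsub (hb₁.trans hle) ha₂,
      adj_eq_pair_of_one_le_block_le_two hsub hb₁ (hle.trans ha₂), hba⟩
  · rintro ⟨ha, hb, hba⟩
    exact ⟨hba, ha ▸ Set.mem_insert u {v}, hb ▸ Set.mem_insert_of_mem u rfl⟩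

theorem REC2_of_block_le (huv : u ≠ v) (hr : ∀ b, r b ∈ Adj b) {lt : B → B → Prop}
    (hlt : ∀ a b, lt a b → block u v Adj r a ≤ block u v Adj r b) : REC2 u v r lt := by
  rintro a b - (⟨hau, hbv, hba⟩ | ⟨hav, hbu, hab⟩)
  · have := hlt b a hba
    have := block_le_one (v := v) (hr a) hau
    have := two_le_block huv (hr b) hbv
    omega
  · have := hlt a b hab
    have := two_le_block huv (hr a) hav
    have := block_le_one (v := v) (hr b) hbu
    omega

end Block

theorem stmt4_general {T B : Type} [Fintype B] (u v : T) (huv : u ≠ v)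
    (Adj : B → Set T) (hsub : ∀ b, Adj b ⊆ {u, v})
    (k : ℕ) (hk : k = {b : B | Adj b = {u, v}}.ncard)
    (r : B → T) (hr : ∀ b, r b ∈ Adj b) :
    ∃ lt : B → B → Prop, IsStrictTotalOrder B lt ∧
      (∀ a b : B,
        ((Adj a = {u} ∧ (Adj b = {u, v} ∨ Adj b = {v})) ∨
         (Adj a = {u, v} ∧ r a = u ∧ ((Adj b = {u, v} ∧ r b = v) ∨ Adj b = {v})) ∨
         (Adj a = {u, v} ∧ r a = v ∧ Adj b = {v})) → lt a b) ∧
      REC2 u v r lt ∧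
      crossNum2 u v Adj lt = k * (k - 1) / 2 := by
  classical
  obtain ⟨lt, hto, hlt_of_lt, hle_of_lt⟩ := exists_isStrictTotalOrder_refining (block u v Adj r)
  refine ⟨lt, hto, fun a b h => hlt_of_lt a b (block_lt_block huv h),
    REC2_of_block_le huv hr hle_of_lt, ?_⟩
  let C : Finset B := {b | Adj b = {u, v}}
  have hC : {p : B × B | Adj p.1 = {u, v} ∧ Adj p.2 = {u, v} ∧ lt p.2 p.1} =
      ↑{p ∈ C ×ˢ C | lt p.2 p.1} := by
    ext p
    simp [C, and_assoc]
  have hkC : k = #C := by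
    rw [hk, ← Set.ncard_coe_finset]
    simp [C]
  rw [crossNum2, crossing_set_eq_common_pairs hsub hle_of_lt, hC, Set.ncard_coe_finset,
    card_filter_product_rel_eq_choose_two lt, hkC, Nat.choose_two_right]

/-- For every red-edge selection `r` there is a linear order with exactly
`k * (k-1) / 2` crossings satisfying the red-edge constraint for `r`; such an
order is obtained by placing the class `{b | Adj b = {u}}` first, then the common
neighbors with `r b = u`, then the common neighbors with `r b = v`, then the
class `{b | Adj b = {v}}`. -/
theorem stmt4 {T B : Type} [Fintype B] (u v : T) (huv : u ≠ v)
    (Adj : B → Set T) (hsub : ∀ b, Adj b ⊆ {u, v}) (hne : ∀ b, (Adj b).Nonempty)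
    (k : ℕ) (hk : k = {b : B | Adj b = {u, v}}.ncard)
    (r : B → T) (hr : ∀ b, r b ∈ Adj b) :
    ∃ lt : B → B → Prop, IsStrictTotalOrder B lt ∧
      (∀ a b : B,
        ((Adj a = {u} ∧ (Adj b = {u, v} ∨ Adj b = {v})) ∨
         (Adj a = {u, v} ∧ r a = u ∧ ((Adj b = {u, v} ∧ r b = v) ∨ Adj b = {v})) ∨
         (Adj a = {u, v} ∧ r a = v ∧ Adj b = {v})) → lt a b) ∧
      REC2 u v r lt ∧
      crossNum2 u v Adj lt = k * (k - 1) / 2 :=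
  stmt4_general u v huv Adj hsub k hk r hr
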